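/- For all natural numbers n and k: (i) J̄ (n+k) is contained in J̄ n, and (ii) for every p ∈ J̄ n the element w₂^k · p lies in J̄ (n+k). (Facts 4.7(a): w₂^k·J̄_n ⊂ J̄_{n+k} ⊂ J̄_n.) -/
import Mathlib


/- Context: `P = 𝔽₂[w₁,w₂]`, `f̄ 0 = 1`, `f̄ 1 = w₁`,
`f̄ (n+2) = w₁·f̄(n+1) + w₂·f̄ n`, and `J̄ n = ⟨f̄ (n+1), w₂·f̄ n⟩`. -/

noncomputable section

open MvPolynomial

abbrev P2 : Type := MvPolynomial (Fin 2) (ZMod 2)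

def w₁ : P2 := X 0
def w₂ : P2 := X 1

def fbar : ℕ → P2
  | 0 => 1
  | 1 => w₁
  | n + 2 => w₁ * fbar (n + 1) + w₂ * fbar n

def Jbar (n : ℕ) : Ideal P2 := Ideal.span {fbar (n + 1), w₂ * fbar n}

lemma gen1 (n : ℕ) : fbar (n + 1) ∈ Jbar n :=
  Ideal.subset_span (by simp)

lemma gen2 (n : ℕ) : w₂ * fbar n ∈ Jbar n :=
  Ideal.subset_span (by simp)

lemma step1 (n : ℕ) : Jbar (n + 1) ≤ Jbar n := by
  rw [Jbar, Ideal.span_le]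
  rintro x hx
  simp only [Set.mem_insert_iff, Set.mem_singleton_iff] at hx
  rcases hx with rfl | rfl
  · show fbar (n + 2) ∈ Jbar n
    rw [show fbar (n + 2) = w₁ * fbar (n + 1) + w₂ * fbar n from rfl]
    exact add_mem (Ideal.mul_mem_left _ _ (gen1 n)) (gen2 n)
  · exact Ideal.mul_mem_left _ _ (gen1 n)

lemma step2 (n : ℕ) : ∀ p ∈ Jbar n, w₂ * p ∈ Jbar (n + 1) := by
  intro p hp
  refine Submodule.span_induction ?_ ?_ ?_ ?_ hp
  · rintro x hx
    simp only [Set.mem_insert_iff, Set.mem_singleton_iff] at hx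
    rcases hx with rfl | rfl
    · exact Ideal.subset_span (by simp)
    · have h : w₂ * fbar n = fbar (n + 2) - w₁ * fbar (n + 1) := by
        rw [show fbar (n + 2) = w₁ * fbar (n + 1) + w₂ * fbar n from rfl]; ring
      rw [h, mul_sub]
      refine sub_mem (Ideal.mul_mem_left _ _ (gen1 (n + 1))) ?_
      rw [show w₂ * (w₁ * fbar (n + 1)) = w₁ * (w₂ * fbar (n + 1)) by ring]
      exact Ideal.mul_mem_left _ _ (gen2 (n + 1))
  · simp
  · intro x y _ _ hx hy
    rw [mul_add]; exact add_mem hx hy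
  · intro r x _ hx
    rw [smul_eq_mul, show w₂ * (r * x) = r * (w₂ * x) by ring]
    exact Ideal.mul_mem_left _ _ hx

/- Statement 4 (Facts 4.7(a)): `w₂^k·J̄_n ⊆ J̄_{n+k} ⊆ J̄_n`. -/
theorem Jbar_facts (n k : ℕ) :
    Jbar (n + k) ≤ Jbar n ∧ ∀ p ∈ Jbar n, w₂ ^ k * p ∈ Jbar (n + k) := by
  constructor
  · induction k with
    | zero => simp
    | succ k ih => exact le_trans (step1 (n + k)) ih
  · induction k with
    | zero => intro p hp; simpa using hp
    | succ k ih =>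
      intro p hp
      have := step2 (n + k) _ (ih p hp)
      rw [show w₂ ^ (k + 1) * p = w₂ * (w₂ ^ k * p) by ring]
      exact this

end
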